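/- First integral and energy of the soliton: Q'(x)² = Q(x)² - (2/(m+1))·Q(x)^(m+1) for all x ∈ ℝ, and consequently the energy E[Q] := (1/2)·∫_ℝ Q'(x)² dx - (1/(m+1))·∫_ℝ Q(x)^(m+1) dx equals -((5-m)/(2·(m+3)))·∫_ℝ Q(x)² dx; in particular E[Q] < 0 whenever 1 < m < 5. -/

import Mathlib

/-!
Write `a = (m-1)/2`. Then `Q^(m-1) = (m+1)/(2 cosh² (a x))` and `Q' = -tanh (a x) · Q`, so
`tanh² = 1 - 1/cosh²` is exactly the first integral. Integrating it reduces the energy to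
`∫ Q²` and `∫ Q^(m+1)`, which are tied together by the Pohozaev-type identity
`∫ Q^(m+1) = 2(m+1)/(m+3) ∫ Q²`, coming from `∫ (tanh (a x) · Q²)' = 0`; the boundary
terms vanish because `Q` decays like `e^{-|x|}`.
-/

open Real MeasureTheory

/-- The explicit soliton profile `Q(x) = ((m+1)/(2 cosh²(((m-1)/2) x)))^(1/(m-1))`. -/
noncomputable def solQ (m : ℝ) (x : ℝ) : ℝ :=
  ((m + 1) / (2 * Real.cosh ((m - 1) / 2 * x) ^ 2)) ^ (1 / (m - 1))

open Set

lemma integrable_exp_neg_mul_abs {c : ℝ} (hc : 0 < c) :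
    Integrable fun x : ℝ => exp (-(c * |x|)) := by
  rw [← integrableOn_univ, ← Iic_union_Ioi (a := (0 : ℝ))]
  refine IntegrableOn.union ?_ ?_
  · refine (integrableOn_exp_mul_Iic hc 0).congr_fun (fun x hx => ?_) measurableSet_Iic
    simp only [abs_of_nonpos (mem_Iic.1 hx), mul_neg, neg_neg]
  · refine (integrableOn_exp_mul_Ioi (neg_neg_of_pos hc) 0).congr_fun (fun x hx => ?_)
      measurableSet_Ioi
    simp only [abs_of_pos (mem_Ioi.1 hx), neg_mul]

lemma hasDerivAt_tanh (x : ℝ) : HasDerivAt tanh (1 / cosh x ^ 2) x := by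
  have h := (hasDerivAt_sinh x).div (hasDerivAt_cosh x) (cosh_pos x).ne'
  rwa [show sinh / cosh = tanh from funext fun y => (tanh_eq_sinh_div_cosh y).symm,
    ← sq, ← sq, cosh_sq_sub_sinh_sq] at h

lemma continuous_tanh : Continuous tanh :=
  continuous_iff_continuousAt.2 fun x => (hasDerivAt_tanh x).continuousAt

lemma tanh_sq_eq_one_sub (x : ℝ) : tanh x ^ 2 = 1 - 1 / cosh x ^ 2 := by
  rw [tanh_eq_sinh_div_cosh, div_pow, sinh_sq]
  field_simp [(cosh_pos x).ne']

section Soliton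

variable {m : ℝ}

lemma solQ_pos (hm : -1 < m) (x : ℝ) : 0 < solQ m x := by
  unfold solQ
  have := cosh_pos ((m - 1) / 2 * x)
  have : 0 < m + 1 := by linarith
  positivity

lemma solQ_rpow_sub_one (hm : 1 < m) (x : ℝ) :
    solQ m x ^ (m - 1) = (m + 1) / (2 * cosh ((m - 1) / 2 * x) ^ 2) := by
  unfold solQ
  rw [one_div, rpow_inv_rpow _ (by linarith)]
  have := cosh_pos ((m - 1) / 2 * x)
  have : 0 < m + 1 := by linarith
  positivity

lemma solQ_rpow_add_one (hm : 1 < m) (x : ℝ) :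
    solQ m x ^ (m + 1) = (m + 1) / (2 * cosh ((m - 1) / 2 * x) ^ 2) * solQ m x ^ 2 := by
  rw [← solQ_rpow_sub_one hm, ← rpow_natCast, ← rpow_add (solQ_pos (by linarith) x)]
  congr 1
  push_cast
  ring

lemma hasDerivAt_solQ (hm : 1 < m) (x : ℝ) :
    HasDerivAt (solQ m) (-tanh ((m - 1) / 2 * x) * solQ m x) x := by
  set g := fun y => (m + 1) / (2 * cosh ((m - 1) / 2 * y) ^ 2)
  have hc := cosh_pos ((m - 1) / 2 * x)
  have hg : 0 < g x := by
    have : 0 < m + 1 := by linarith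
    positivity
  have hg' : HasDerivAt g (-(m - 1) * tanh ((m - 1) / 2 * x) * g x) x := by
    have hcosh : HasDerivAt (fun y => cosh ((m - 1) / 2 * y))
        (sinh ((m - 1) / 2 * x) * ((m - 1) / 2)) x :=
      (hasDerivAt_cosh _).comp x ((hasDerivAt_id x).const_mul _ |>.congr_deriv (mul_one _))
    refine ((hasDerivAt_const x (m + 1)).div ((hcosh.pow 2).const_mul 2)
      (by simp only [Pi.pow_apply]; positivity)).congr_deriv ?_
    simp only [g, Pi.pow_apply, tanh_eq_sinh_div_cosh]
    field_simp
    ring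
  refine (hg'.rpow_const (p := 1 / (m - 1)) (Or.inl hg.ne')).congr_deriv ?_
  rw [rpow_sub_one hg.ne']
  change _ = _ * g x ^ (1 / (m - 1))
  have : m - 1 ≠ 0 := by linarith
  field_simp

theorem deriv_solQ_sq (hm : 1 < m) (x : ℝ) :
    deriv (solQ m) x ^ 2 = solQ m x ^ 2 - 2 / (m + 1) * solQ m x ^ (m + 1) := by
  have : m + 1 ≠ 0 := by linarith
  rw [(hasDerivAt_solQ hm x).deriv, solQ_rpow_add_one hm, neg_mul, neg_sq, mul_pow,
    tanh_sq_eq_one_sub]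
  field_simp

lemma continuous_solQ (hm : 1 < m) : Continuous (solQ m) :=
  continuous_iff_continuousAt.2 fun x => (hasDerivAt_solQ hm x).continuousAt

lemma solQ_le_mul_exp_neg_abs (hm : 1 < m) (x : ℝ) :
    solQ m x ≤ (2 * (m + 1)) ^ (1 / (m - 1)) * exp (-|x|) := by
  have ha : 0 < (m - 1) / 2 := by linarith
  have hm1 : 0 < m + 1 := by linarith
  have hc := cosh_pos ((m - 1) / 2 * x)
  have hexp : exp ((m - 1) / 2 * |x|) ≤ 2 * cosh ((m - 1) / 2 * x) := by
    have := exp_abs_le ((m - 1) / 2 * x)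
    rw [abs_mul, abs_of_pos ha] at this
    rw [cosh_eq]
    linarith
  have hsq : exp ((m - 1) * |x|) ≤ 4 * cosh ((m - 1) / 2 * x) ^ 2 :=
    calc exp ((m - 1) * |x|) = exp ((m - 1) / 2 * |x|) ^ 2 := by
          rw [← exp_nat_mul]; push_cast; ring_nf
      _ ≤ (2 * cosh ((m - 1) / 2 * x)) ^ 2 := pow_le_pow_left₀ (exp_pos _).le hexp 2
      _ = 4 * cosh ((m - 1) / 2 * x) ^ 2 := by ring
  have hbase : (m + 1) / (2 * cosh ((m - 1) / 2 * x) ^ 2) ≤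
      2 * (m + 1) * exp (-((m - 1) * |x|)) :=
    calc (m + 1) / (2 * cosh ((m - 1) / 2 * x) ^ 2) ≤ (m + 1) / (exp ((m - 1) * |x|) / 2) :=
          div_le_div_of_nonneg_left hm1.le (by positivity) (by linarith)
      _ = 2 * (m + 1) * exp (-((m - 1) * |x|)) := by
          rw [exp_neg]; field_simp
  have hne : m - 1 ≠ 0 := by linarith
  calc solQ m x ≤ (2 * (m + 1) * exp (-((m - 1) * |x|))) ^ (1 / (m - 1)) :=
        rpow_le_rpow (by positivity) hbase (by positivity)
    _ = (2 * (m + 1)) ^ (1 / (m - 1)) * exp (-|x|) := by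
        rw [mul_rpow (by positivity) (exp_pos _).le, ← exp_mul]
        field_simp

lemma integrable_solQ_sq (hm : 1 < m) : Integrable fun x => solQ m x ^ 2 := by
  refine ((integrable_exp_neg_mul_abs two_pos).const_mul
    (((2 * (m + 1)) ^ (1 / (m - 1))) ^ 2)).mono' ((continuous_solQ hm).pow 2).aestronglyMeasurable
    (Filter.Eventually.of_forall fun x => ?_)
  have hQ := (solQ_pos (by linarith) x).le
  rw [norm_pow, norm_of_nonneg hQ, show -(2 * |x|) = -|x| + -|x| by ring, exp_add, ← sq,
    ← mul_pow]
  exact pow_le_pow_left₀ hQ (solQ_le_mul_exp_neg_abs hm x) 2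

lemma integrable_solQ_rpow_add_one (hm : 1 < m) : Integrable fun x => solQ m x ^ (m + 1) := by
  have hmeas := (continuous_solQ hm).rpow_const (p := m + 1) fun x =>
    Or.inl (solQ_pos (by linarith) x).ne'
  refine ((integrable_solQ_sq hm).const_mul ((m + 1) / 2)).mono' hmeas.aestronglyMeasurable
    (Filter.Eventually.of_forall fun x => ?_)
  have hQ := solQ_pos (by linarith) x
  rw [norm_of_nonneg (rpow_pos_of_pos hQ _).le, solQ_rpow_add_one hm]
  have h1 := one_le_cosh ((m - 1) / 2 * x)
  gcongr
  nlinarith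

theorem integral_solQ_rpow_add_one (hm : 1 < m) :
    ∫ x, solQ m x ^ (m + 1) = 2 * (m + 1) / (m + 3) * ∫ x, solQ m x ^ 2 := by
  have hm1 : m + 1 ≠ 0 := by linarith
  have hm3 : m + 3 ≠ 0 := by linarith
  have hderiv : ∀ x, HasDerivAt (fun y => tanh ((m - 1) / 2 * y) * solQ m y ^ 2)
      ((m + 3) / (m + 1) * solQ m x ^ (m + 1) - 2 * solQ m x ^ 2) x := by
    intro x
    have hlin : HasDerivAt (fun y => (m - 1) / 2 * y) ((m - 1) / 2) x :=
      (hasDerivAt_id x).const_mul _ |>.congr_deriv (mul_one _)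
    refine (((hasDerivAt_tanh _).comp x hlin).mul ((hasDerivAt_solQ hm x).pow 2)).congr_deriv ?_
    have hc := (cosh_pos ((m - 1) / 2 * x)).ne'
    simp only [Function.comp_apply, Pi.pow_apply]
    rw [solQ_rpow_add_one hm, tanh_eq_sinh_div_cosh]
    field_simp
    rw [sinh_sq]
    ring
  have hF : Integrable fun x => tanh ((m - 1) / 2 * x) * solQ m x ^ 2 :=
    (integrable_solQ_sq hm).bdd_mul
      (continuous_tanh.comp (continuous_const_mul _)).aestronglyMeasurable
      (Filter.Eventually.of_forall fun x => (abs_tanh_lt_one _).le)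
  have hF' := ((integrable_solQ_rpow_add_one hm).const_mul ((m + 3) / (m + 1))).sub
    ((integrable_solQ_sq hm).const_mul 2)
  have h := integral_eq_zero_of_hasDerivAt_of_integrable hderiv hF' hF
  rw [integral_sub ((integrable_solQ_rpow_add_one hm).const_mul _)
    ((integrable_solQ_sq hm).const_mul 2), integral_const_mul, integral_const_mul] at h
  field_simp at h ⊢
  linarith

lemma integral_deriv_solQ_sq (hm : 1 < m) :
    ∫ x, deriv (solQ m) x ^ 2 =
      (∫ x, solQ m x ^ 2) - 2 / (m + 1) * ∫ x, solQ m x ^ (m + 1) := by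
  simp_rw [deriv_solQ_sq hm]
  rw [integral_sub (integrable_solQ_sq hm) ((integrable_solQ_rpow_add_one hm).const_mul _),
    integral_const_mul]

lemma integral_solQ_sq_pos (hm : 1 < m) : 0 < ∫ x, solQ m x ^ 2 := by
  refine (integral_pos_iff_support_of_nonneg (fun x => sq_nonneg _) (integrable_solQ_sq hm)).2 ?_
  rw [Function.support_eq_univ fun x => (pow_pos (solQ_pos (by linarith) x) 2).ne']
  simp

end Soliton

theorem stmt18 (m : ℝ) (hm : 1 < m) :
    (∀ x, deriv (solQ m) x ^ 2 = solQ m x ^ 2 - (2 / (m + 1)) * solQ m x ^ (m + 1)) ∧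
    ((1/2) * (∫ x : ℝ, deriv (solQ m) x ^ 2)
        - (1 / (m + 1)) * (∫ x : ℝ, solQ m x ^ (m + 1))
      = -((5 - m) / (2 * (m + 3))) * ∫ x : ℝ, solQ m x ^ 2) ∧
    (m < 5 →
      (1/2) * (∫ x : ℝ, deriv (solQ m) x ^ 2)
        - (1 / (m + 1)) * (∫ x : ℝ, solQ m x ^ (m + 1)) < 0) := by
  have energy : (1/2) * (∫ x : ℝ, deriv (solQ m) x ^ 2)
        - (1 / (m + 1)) * (∫ x : ℝ, solQ m x ^ (m + 1))
      = -((5 - m) / (2 * (m + 3))) * ∫ x : ℝ, solQ m x ^ 2 := by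
    have : m + 1 ≠ 0 := by linarith
    have : m + 3 ≠ 0 := by linarith
    rw [integral_deriv_solQ_sq hm, integral_solQ_rpow_add_one hm]
    field_simp
    ring
  refine ⟨deriv_solQ_sq hm, energy, fun hm5 => ?_⟩
  rw [energy]
  have : 0 < (5 - m) / (2 * (m + 3)) := div_pos (by linarith) (by linarith)
  exact mul_neg_of_neg_of_pos (by linarith) (integral_solQ_sq_pos hm)
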